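/- Let X be a continuum (a compact connected metric space with more than one point), let n ≥ 2 be an integer, and let f : X → X be a continuous map. Then F_n(f) is indecomposable if and only if SF_n(f) is indecomposable; moreover, if F_n(f) is indecomposable, then f is indecomposable. -/

import Mathlib

/-!
`F_1(X)` is closed in `F_n(X)` and, since `X` has no isolated points and `n ≥ 2`, nowhere dense.
So removing it from a nonempty open set leaves a nonempty open set, on which the quotient map
`q` is injective and open. Closed `+invariant` sets with nonempty interior can therefore be pulled
back by `q` and pushed forward by `q` (up to `F_1(X)`), and in both directions a nonempty open
subset of the intersection survives.

For `f` itself, a closed invariant `A ⊆ X` gives the closed invariant set `F_n(A) ⊆ F_n(X)`,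
whose interior is `F_n(int A)`; hence `int (F_n(A) ∩ F_n(B)) = F_n(int (A ∩ B))` is nonempty
only if `int (A ∩ B)` is.
-/

open Metric Set TopologicalSpace

variable (X : Type*) [MetricSpace X] (n : ℕ)

/-- The `n`-fold symmetric product `F_n(X)`: nonempty subsets of `X` with at most `n`
points, as a subspace of the nonempty compact subsets of `X` with the Hausdorff metric. -/
abbrev Fn := {A : NonemptyCompacts X // (A : Set X).Finite ∧ (A : Set X).ncard ≤ n}

/-- The induced map `F_n(f)` on the `n`-fold symmetric product, `A ↦ f(A)`. -/
noncomputable def FnMap (f : X → X) : Fn X n → Fn X n := fun A =>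
  ⟨⟨⟨f '' (A.1 : Set X), (A.2.1.image f).isCompact⟩, A.1.nonempty.image f⟩,
    A.2.1.image f, le_trans (Set.ncard_image_le A.2.1) A.2.2⟩

/-- `F_1(X) ⊆ F_n(X)`: the set of singletons. -/
def F1 : Set (Fn X n) := {A | ∃ x : X, (A.1 : Set X) = {x}}

/-- The setoid collapsing `F_1(X)` to a point. -/
def SFnSetoid : Setoid (Fn X n) where
  r A B := A = B ∨ (A ∈ F1 X n ∧ B ∈ F1 X n)
  iseqv := by
    refine ⟨fun _ => Or.inl rfl, fun h => h.imp Eq.symm And.symm, fun h₁ h₂ => ?_⟩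
    rcases h₁ with rfl | h₁
    · exact h₂
    · rcases h₂ with rfl | h₂
      · exact Or.inr h₁
      · exact Or.inr ⟨h₁.1, h₂.2⟩

/-- The `n`-fold symmetric product suspension `SF_n(X) = F_n(X)/F_1(X)`,
with the quotient topology. -/
abbrev SFn := Quotient (SFnSetoid X n)

/-- The quotient map `q : F_n(X) → SF_n(X)`. -/
def SFnQ : Fn X n → SFn X n := Quotient.mk (SFnSetoid X n)

/-- The induced map `SF_n(f)` on the suspension, with `SF_n(f) ∘ q = q ∘ F_n(f)`. -/
noncomputable def SFnMap (f : X → X) : SFn X n → SFn X n :=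
  Quotient.lift (fun A => SFnQ X n (FnMap X n f A))
    (fun A B h => Quotient.sound (by
      rcases h with rfl | ⟨⟨x, hx⟩, ⟨y, hy⟩⟩
      · exact Or.inl rfl
      · exact Or.inr ⟨⟨f x, by simp [FnMap, hx]⟩, ⟨f y, by simp [FnMap, hy]⟩⟩))

/-- The metric `ρ` on `SF_n(X)`:
`ρ(χ₁,χ₂) = H(F_1(X) ∪ q⁻¹(χ₁), F_1(X) ∪ q⁻¹(χ₂))` where `H` is the Hausdorff
distance between subsets of `F_n(X)`. -/
noncomputable def SFnDist : SFn X n → SFn X n → ℝ := fun a b =>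
  Metric.hausdorffDist (F1 X n ∪ SFnQ X n ⁻¹' {a}) (F1 X n ∪ SFnQ X n ⁻¹' {b})

/-- `g` is indecomposable: any two closed `+invariant` sets with nonempty interior
have intersection with nonempty interior. -/
def Indecomposable' {Z : Type*} [TopologicalSpace Z] (g : Z → Z) : Prop :=
  ∀ A B : Set Z, IsClosed A → IsClosed B → g '' A ⊆ A → g '' B ⊆ B →
    (interior A).Nonempty → (interior B).Nonempty → (interior (A ∩ B)).Nonempty

open Function Topology

def IsCollapse {Y Z : Type*} (q : Y → Z) (F : Set Y) : Prop :=
  ∀ x y, q x = q y ↔ x = y ∨ x ∈ F ∧ y ∈ F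

namespace IsCollapse

variable {Y Z : Type*} {q : Y → Z} {F : Set Y}

lemma preimage_image_diff_subset (hqF : IsCollapse q F) (S : Set Y) :
    q ⁻¹' (q '' S) \ F ⊆ S := by
  rintro y ⟨⟨x, hx, hxy⟩, hyF⟩
  rcases (hqF x y).1 hxy with rfl | ⟨-, hy⟩
  exacts [hx, absurd hy hyF]

lemma preimage_image_of_disjoint (hqF : IsCollapse q F) {S : Set Y} (hS : Disjoint S F) :
    q ⁻¹' (q '' S) = S := by
  refine (subset_preimage_image q S).antisymm' fun y hy => ?_
  refine hqF.preimage_image_diff_subset S ⟨hy, fun hyF => ?_⟩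
  obtain ⟨x, hx, hxy⟩ := hy
  rcases (hqF x y).1 hxy with rfl | ⟨hxF, -⟩
  exacts [hS.notMem_of_mem_left hx hyF, hS.notMem_of_mem_left hx hxF]

variable [TopologicalSpace Y] [TopologicalSpace Z]

lemma isClosed_image (hq : IsQuotientMap q) (hqF : IsCollapse q F) (hF : IsClosed F)
    {S : Set Y} (hS : IsClosed S) : IsClosed (q '' S) := by
  rw [← hq.isClosed_preimage]
  by_cases hSF : Disjoint S F
  · rwa [hqF.preimage_image_of_disjoint hSF]
  obtain ⟨x, hxS, hxF⟩ := not_disjoint_iff.1 hSF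
  have : q ⁻¹' (q '' S) = S ∪ F := by
    refine Subset.antisymm (fun y hy => ?_) (union_subset (subset_preimage_image q S) ?_)
    · by_cases hyF : y ∈ F
      exacts [Or.inr hyF, Or.inl (hqF.preimage_image_diff_subset S ⟨hy, hyF⟩)]
    · exact fun y hyF => ⟨x, hxS, (hqF x y).2 (Or.inr ⟨hxF, hyF⟩)⟩
  rw [this]
  exact hS.union hF

/-- Removing the nowhere dense set `F` from a nonempty open set leaves a nonempty open set on
which `q` is injective and open. -/
lemma interior_image_nonempty (hq : IsQuotientMap q) (hqF : IsCollapse q F)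
    (hF : IsClosed F) (hF' : interior F = ∅) {S : Set Y} (hS : (interior S).Nonempty) :
    (interior (q '' S)).Nonempty := by
  obtain ⟨x, hx⟩ := (interior_eq_empty_iff_dense_compl.1 hF').inter_open_nonempty _
    isOpen_interior hS
  have hopen : IsOpen (q '' (interior S \ F)) := by
    rw [← hq.isOpen_preimage, hqF.preimage_image_of_disjoint disjoint_sdiff_left]
    exact isOpen_interior.sdiff hF
  exact ⟨q x, hopen.subset_interior_iff.2 (image_mono (sdiff_subset.trans interior_subset))
    (mem_image_of_mem q hx)⟩

theorem indecomposable_map (hq : IsQuotientMap q) (hqF : IsCollapse q F)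
    (hF : IsClosed F) (hF' : interior F = ∅) {g : Y → Y} {h : Z → Z} (hgh : Semiconj q g h)
    (hg : Indecomposable' g) : Indecomposable' h := by
  intro A B hA hB hhA hhB hA' hB'
  have hpull : ∀ {S : Set Z}, (interior S).Nonempty → (interior (q ⁻¹' S)).Nonempty :=
    fun {S} ⟨z, hz⟩ => (hq.surjective z).imp fun y hy =>
      preimage_interior_subset_interior_preimage hq.continuous (by rwa [mem_preimage, hy])
  have hAB := hg _ _ (hA.preimage hq.continuous) (hB.preimage hq.continuous)
    (hgh.mapsTo_preimage (mapsTo_iff_image_subset.2 hhA)).image_subset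
    (hgh.mapsTo_preimage (mapsTo_iff_image_subset.2 hhB)).image_subset (hpull hA') (hpull hB')
  refine (hqF.interior_image_nonempty hq hF hF' hAB).mono (interior_mono ?_)
  rw [← preimage_inter]
  exact image_preimage_subset q _

theorem indecomposable_of_map (hq : IsQuotientMap q) (hqF : IsCollapse q F)
    (hF : IsClosed F) (hF' : interior F = ∅) {g : Y → Y} {h : Z → Z} (hgh : Semiconj q g h)
    (hh : Indecomposable' h) : Indecomposable' g := by
  intro A B hA hB hgA hgB hA' hB'
  obtain ⟨z, hz⟩ := hh _ _ (hqF.isClosed_image hq hF hA) (hqF.isClosed_image hq hF hB)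
    (hgh.mapsTo_image (mapsTo_iff_image_subset.2 hgA)).image_subset
    (hgh.mapsTo_image (mapsTo_iff_image_subset.2 hgB)).image_subset
    (hqF.interior_image_nonempty hq hF hF' hA') (hqF.interior_image_nonempty hq hF hF' hB')
  have hU : IsOpen (q ⁻¹' interior (q '' A ∩ q '' B)) := isOpen_interior.preimage hq.continuous
  obtain ⟨y, hy⟩ := (interior_eq_empty_iff_dense_compl.1 hF').inter_open_nonempty _ hU
    ((hq.surjective z).imp fun y hy => by rwa [mem_preimage, hy])
  refine ⟨y, (hU.sdiff hF).subset_interior_iff.2 (fun x ⟨hx, hxF⟩ => ?_) hy⟩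
  have hx' := interior_subset hx
  exact ⟨hqF.preimage_image_diff_subset A ⟨hx'.1, hxF⟩,
    hqF.preimage_image_diff_subset B ⟨hx'.2, hxF⟩⟩

theorem indecomposable_iff (hq : IsQuotientMap q) (hqF : IsCollapse q F) (hF : IsClosed F)
    (hF' : interior F = ∅) {g : Y → Y} {h : Z → Z} (hgh : Semiconj q g h) :
    Indecomposable' g ↔ Indecomposable' h :=
  ⟨hqF.indecomposable_map hq hF hF' hgh, hqF.indecomposable_of_map hq hF hF' hgh⟩

end IsCollapse

namespace Fn

variable {X : Type*} [MetricSpace X] {n : ℕ}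

lemma dist_eq (A B : Fn X n) : dist A B = hausdorffDist (A.1 : Set X) (B.1 : Set X) := rfl

lemma isClosed_F1 : IsClosed (F1 X n) := by
  convert (NonemptyCompacts.isClosedEmbedding_singleton (α := X)).isClosed_range.preimage
    continuous_subtype_val using 1
  ext A
  simp [F1, NonemptyCompacts.ext_iff, eq_comm]

lemma interior_F1 [PerfectSpace X] (hn : 2 ≤ n) : interior (F1 X n) = ∅ := by
  refine eq_empty_of_forall_notMem fun A hA => ?_
  obtain ⟨x, hx⟩ := interior_subset hA
  obtain ⟨ε, hε, hball⟩ := Metric.isOpen_iff.1 isOpen_interior A hA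
  obtain ⟨y, hyx, hy⟩ :=
    Filter.nonempty_of_mem (inter_mem_nhdsWithin {x}ᶜ (ball_mem_nhds x hε))
  have hxy : x ≠ y := Ne.symm hyx
  let B : Fn X n := ⟨⟨⟨{x, y}, (toFinite {x, y}).isCompact⟩, insert_nonempty _ _⟩,
    toFinite {x, y}, (ncard_pair hxy).trans_le hn⟩
  have hAB : dist A B < ε := calc
    dist A B = hausdorffDist {x} {x, y} := by rw [dist_eq, hx]; rfl
    _ ≤ diam ({x} ∪ {x, y}) := hausdorffDist_le_diam (singleton_nonempty x)
        Bornology.isBounded_singleton (insert_nonempty x {y}) (toFinite {x, y}).isBounded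
    _ = dist x y := by rw [singleton_union, insert_eq_of_mem (mem_insert x {y}), diam_pair]
    _ < ε := by rwa [dist_comm, ← mem_ball]
  obtain ⟨z, hz⟩ : B ∈ F1 X n := interior_subset (hball (mem_ball'.2 hAB))
  have hxz : x ∈ ({z} : Set X) := hz ▸ mem_insert x {y}
  have hyz : y ∈ ({z} : Set X) := hz ▸ mem_insert_of_mem x rfl
  exact hxy ((eq_of_mem_singleton hxz).trans (eq_of_mem_singleton hyz).symm)

/-- The copy of `F_n(A)` inside `F_n(X)`. -/
def subsets (n : ℕ) (A : Set X) : Set (Fn X n) := {C | (C.1 : Set X) ⊆ A}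

lemma isClosed_subsets {A : Set X} (hA : IsClosed A) : IsClosed (subsets n A) :=
  (NonemptyCompacts.isClosed_subsets_of_isClosed hA).preimage continuous_subtype_val

lemma isOpen_subsets {U : Set X} (hU : IsOpen U) : IsOpen (subsets n U) :=
  (NonemptyCompacts.isOpen_subsets_of_isOpen hU).preimage continuous_subtype_val

lemma subsets_inter (A B : Set X) : subsets n (A ∩ B) = subsets n A ∩ subsets n B :=
  ext fun _ => subset_inter_iff

lemma image_subsets_subset {f : X → X} {A : Set X} (hfA : f '' A ⊆ A) :
    FnMap X n f '' subsets n A ⊆ subsets n A := by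
  rintro _ ⟨C, hC, rfl⟩
  exact (image_mono hC).trans hfA

lemma exists_dist_le_of_mem (C : Fn X n) {x : X} (hx : x ∈ (C.1 : Set X)) (y : X) :
    ∃ D : Fn X n, (D.1 : Set X) = insert y ((C.1 : Set X) \ {x}) ∧ dist C D ≤ dist x y := by
  have hfin : (insert y ((C.1 : Set X) \ {x})).Finite := C.2.1.sdiff.insert y
  have hcard : (insert y ((C.1 : Set X) \ {x})).ncard ≤ n := calc
    _ ≤ ((C.1 : Set X) \ {x}).ncard + 1 := ncard_insert_le _ _
    _ = (C.1 : Set X).ncard := ncard_sdiff_singleton_add_one hx C.2.1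
    _ ≤ n := C.2.2
  refine ⟨⟨⟨⟨_, hfin.isCompact⟩, insert_nonempty _ _⟩, hfin, hcard⟩, rfl,
    hausdorffDist_le_of_mem_dist dist_nonneg (fun z hz => ?_) ?_⟩
  · by_cases hzx : z = x
    · exact ⟨y, mem_insert y _, hzx ▸ le_rfl⟩
    · exact ⟨z, mem_insert_of_mem _ ⟨hz, hzx⟩, by simp⟩
  · rintro z (rfl | ⟨hz, -⟩)
    · exact ⟨x, hx, (dist_comm _ _).le⟩
    · exact ⟨z, hz, by simp⟩

lemma interior_subsets (A : Set X) : interior (subsets n A) = subsets n (interior A) := by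
  refine Subset.antisymm (fun C hC x hx => ?_)
    ((isOpen_subsets isOpen_interior).subset_interior_iff.2 fun C hC => hC.trans interior_subset)
  obtain ⟨ε, hε, hball⟩ := Metric.isOpen_iff.1 isOpen_interior C hC
  refine mem_interior_iff_mem_nhds.2 (Metric.mem_nhds_iff.2 ⟨ε, hε, fun y hy => ?_⟩)
  obtain ⟨D, hD, hCD⟩ := C.exists_dist_le_of_mem hx y
  have hD' : D ∈ subsets n A :=
    interior_subset (hball (mem_ball'.2 (hCD.trans_lt (mem_ball'.1 hy))))
  exact hD' (hD ▸ mem_insert y _)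

end Fn

section

variable {X : Type*} [MetricSpace X] {n : ℕ}

theorem indecomposable_of_indecomposable_FnMap (hn : 1 ≤ n) {f : X → X}
    (h : Indecomposable' (FnMap X n f)) : Indecomposable' f := by
  have hsingle : ∀ {S : Set X}, (interior S).Nonempty → (interior (Fn.subsets n S)).Nonempty :=
    fun ⟨x, hx⟩ => ⟨⟨{x}, finite_singleton x, (ncard_singleton x).trans_le hn⟩, by
      rw [Fn.interior_subsets]
      exact singleton_subset_iff.2 hx⟩
  intro A B hA hB hfA hfB hA' hB'
  obtain ⟨C, hC⟩ := h _ _ (Fn.isClosed_subsets hA) (Fn.isClosed_subsets hB)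
    (Fn.image_subsets_subset hfA) (Fn.image_subsets_subset hfB) (hsingle hA') (hsingle hB')
  rw [← Fn.subsets_inter, Fn.interior_subsets] at hC
  exact C.1.nonempty.mono hC

lemma isCollapse_SFnQ : IsCollapse (SFnQ X n) (F1 X n) := fun _ _ => Quotient.eq

lemma semiconj_SFnQ (f : X → X) : Semiconj (SFnQ X n) (FnMap X n f) (SFnMap X n f) :=
  fun _ => rfl

end

theorem stmt7_general (X : Type*) [MetricSpace X] [ConnectedSpace X] [Nontrivial X]
    (n : ℕ) (hn : 2 ≤ n) (f : X → X) :
    (Indecomposable' (FnMap X n f) ↔ Indecomposable' (SFnMap X n f)) ∧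
    (Indecomposable' (FnMap X n f) → Indecomposable' f) :=
  ⟨isCollapse_SFnQ.indecomposable_iff isQuotientMap_quotient_mk' Fn.isClosed_F1
      (Fn.interior_F1 hn) (semiconj_SFnQ f),
    indecomposable_of_indecomposable_FnMap (one_le_two.trans hn)⟩

theorem stmt7 (X : Type*) [MetricSpace X] [CompactSpace X] [ConnectedSpace X] [Nontrivial X]
    (n : ℕ) (hn : 2 ≤ n) (f : X → X) (hf : Continuous f) :
    (Indecomposable' (FnMap X n f) ↔ Indecomposable' (SFnMap X n f)) ∧
    (Indecomposable' (FnMap X n f) → Indecomposable' f) :=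
  stmt7_general X n hn f
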